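/- arXiv:1712.04061 — 2 statements merged into one kernel-verified Lean document; each statement's English description precedes it below -/
import Mathlib

section
/- Coercivity of the nonlocal p-Laplace operator (inequality (1.10)): Let n ≥ 1, s ∈ (0,1), p > 1, Λ ≥ 1, and let K : ℝ^n × ℝ^n → ℝ be measurable with Λ^{-1}|x−y|^{−(n+sp)} ≤ K(x,y) ≤ Λ|x−y|^{−(n+sp)} for x ≠ y. There exist constants α > 0 and C < ∞, depending only on p and Λ, such that for all measurable u, g : ℝ^n → ℝ with [u]_{W^{s,p}(ℝ^n)} < ∞ and [g]_{W^{s,p}(ℝ^n)} < ∞: ∫_{ℝ^n}∫_{ℝ^n} K(x,y) |δ(u+g)(x,y)|^{p−2} δ(u+g)(x,y) · δu(x,y) dx dy ≥ α [u]_{W^{s,p}(ℝ^n)}^p − C [g]_{W^{s,p}(ℝ^n)}^p, where δf(x,y) = f(x) − f(y). -/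
open MeasureTheory Set Metric ENNReal

noncomputable section

abbrev En (n : ℕ) : Type := EuclideanSpace ℝ (Fin n)

/-- The `p`-th power of the Gagliardo seminorm on `ℝ^n`, as a `[0,∞]`-valued integral. -/
def gagL (n : ℕ) (s p : ℝ) (f : En n → ℝ) : ℝ≥0∞ :=
  ∫⁻ x, ∫⁻ y, ENNReal.ofReal (|f x - f y| ^ p * ‖x - y‖ ^ (-((n : ℝ) + s * p)))

/-- The Gagliardo seminorm `[f]_{W^{s,p}(ℝ^n)}` (real-valued; meaningful when finite). -/
def gagNorm (n : ℕ) (s p : ℝ) (f : En n → ℝ) : ℝ :=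
  (gagL n s p f).toReal ^ (1 / p)

lemma young_eps {a b ε p : ℝ} (ha : 0 ≤ a) (hb : 0 ≤ b) (hε : 0 < ε) (hp : 1 < p) :
    a ^ (p - 1) * b ≤ ε * a ^ p + ε ^ (1 - p) * b ^ p := by
  have hp1 : (0:ℝ) < p - 1 := by linarith
  have hεp : 0 < ε ^ (1 - p) := Real.rpow_pos_of_pos hε _
  by_cases hc : b ≤ ε * a
  · have h1 : a ^ (p - 1) * b ≤ a ^ (p - 1) * (ε * a) :=
      mul_le_mul_of_nonneg_left hc (Real.rpow_nonneg ha _)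
    have h2 : a ^ (p - 1) * a = a ^ p := by
      rcases eq_or_lt_of_le ha with h | h
      · rw [← h]
        rw [Real.zero_rpow (by linarith), Real.zero_rpow (by linarith), zero_mul]
      · rw [← Real.rpow_add_one h.ne' (p-1)]
        norm_num
    have : a ^ (p - 1) * (ε * a) = ε * a ^ p := by rw [← h2]; ring
    calc a ^ (p - 1) * b ≤ ε * a ^ p := by rw [← this]; exact h1
      _ ≤ ε * a ^ p + ε ^ (1 - p) * b ^ p := by
        have : 0 ≤ ε ^ (1 - p) * b ^ p := mul_nonneg hεp.le (Real.rpow_nonneg hb _)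
        linarith
  · push_neg at hc
    have hb0 : 0 < b := lt_of_le_of_lt (mul_nonneg hε.le ha) hc
    have hab : a ≤ b / ε := by rw [le_div_iff₀ hε]; nlinarith
    have h1 : a ^ (p - 1) ≤ (b / ε) ^ (p - 1) :=
      Real.rpow_le_rpow ha hab hp1.le
    have h2 : (b / ε) ^ (p - 1) * b = ε ^ (1 - p) * b ^ p := by
      rw [Real.div_rpow hb hε.le]
      rw [show (1 - p) = -(p-1) by ring, Real.rpow_neg hε.le]
      rw [div_eq_mul_inv]
      rw [show b ^ (p-1) * (ε ^ (p-1))⁻¹ * b = (ε ^ (p-1))⁻¹ * (b ^ (p-1) * b) by ring]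
      congr 1
      rw [← Real.rpow_add_one hb0.ne' (p-1)]
      norm_num
    have h3 : a ^ (p - 1) * b ≤ ε ^ (1 - p) * b ^ p := by
      rw [← h2]; exact mul_le_mul_of_nonneg_right h1 hb0.le
    have : 0 ≤ ε * a ^ p := mul_nonneg hε.le (Real.rpow_nonneg ha _)
    linarith

-- two-power inequality

lemma two_pow_ineq {x y p : ℝ} (hx : 0 ≤ x) (hy : 0 ≤ y) (hp : 1 ≤ p) :
    (x + y) ^ p ≤ 2 ^ (p - 1) * (x ^ p + y ^ p) := by
  have := NNReal.rpow_add_le_mul_rpow_add_rpow x.toNNReal y.toNNReal hp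
  have h := NNReal.coe_le_coe.2 this
  push_cast [NNReal.coe_rpow, Real.coe_toNNReal x hx, Real.coe_toNNReal y hy] at h
  convert h using 3
  all_goals norm_num

lemma abs_aux {w p : ℝ} (hw : w ≠ 0) :
    |w| ^ (p - 2) * |w| = |w| ^ (p - 1) := by
  have h : 0 < |w| := abs_pos.2 hw
  have e := Real.rpow_add h (p - 2) 1
  rw [Real.rpow_one] at e
  rw [← e]; congr 1; ring

lemma abs_rpow_self_mul {w p : ℝ} (hw : w ≠ 0) :
    |w| ^ (p - 2) * w * w = |w| ^ p := by
  have h : 0 < |w| := abs_pos.2 hw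
  have hww : w * w = |w| * |w| := (abs_mul_abs_self w).symm
  rw [mul_assoc, hww, ← mul_assoc, abs_aux hw]
  have e := Real.rpow_add h (p - 1) 1
  rw [Real.rpow_one] at e
  rw [← e]; congr 1; ring

/-- key pointwise lower bound -/

lemma key_lower {p Λ a b k ρ : ℝ} (hp : 1 < p) (hΛ : 1 ≤ Λ) (hρ : 0 ≤ ρ)
    (hk1 : Λ⁻¹ * ρ ≤ k) (hk2 : k ≤ Λ * ρ) :
    (Λ⁻¹ * 2 ^ (-p)) * (|a| ^ p * ρ) -
      (Λ⁻¹ / 2 + Λ * (Λ⁻¹ ^ 2 / 2) ^ (1 - p)) * (|b| ^ p * ρ)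
      ≤ k * |a + b| ^ (p - 2) * (a + b) * a := by
  have hΛ0 : (0:ℝ) < Λ := by linarith
  have hΛi : (0:ℝ) < Λ⁻¹ := inv_pos.2 hΛ0
  have hk0 : 0 ≤ k := le_trans (mul_nonneg hΛi.le hρ) hk1
  set ε : ℝ := Λ⁻¹ ^ 2 / 2 with hεdef
  have hε : 0 < ε := by positivity
  have hεp : 0 < ε ^ (1 - p) := Real.rpow_pos_of_pos hε _
  have hεΛ : Λ * ε = Λ⁻¹ / 2 := by rw [hεdef]; field_simp
  clear_value ε
  set w : ℝ := a + b with hwdef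
  clear_value w
  by_cases hw : w = 0
  · have hab : a = -b := by rw [hwdef] at hw; linarith
    have hT : k * |w| ^ (p - 2) * w * a = 0 := by
      rw [hw]; ring
    rw [hT, hab, abs_neg]
    have h2 : (2:ℝ) ^ (-p) ≤ 2 ^ (-(1:ℝ)) :=
      Real.rpow_le_rpow_of_exponent_le one_le_two (by linarith)
    have h3 : (2:ℝ) ^ (-(1:ℝ)) = 1/2 := by
      rw [Real.rpow_neg_one]; norm_num
    have h4 : Λ⁻¹ * 2 ^ (-p) ≤ Λ⁻¹ / 2 := by
      rw [h3] at h2; nlinarith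
    have h1 : Λ⁻¹ * 2 ^ (-p) ≤ Λ⁻¹ / 2 + Λ * ε ^ (1 - p) := by
      nlinarith [mul_nonneg hΛ0.le hεp.le]
    have hnn : 0 ≤ |b| ^ p * ρ := mul_nonneg (Real.rpow_nonneg (abs_nonneg b) _) hρ
    nlinarith
  · have hwp : 0 < |w| := abs_pos.2 hw
    have hwnn : 0 ≤ |w| ^ p := Real.rpow_nonneg (abs_nonneg w) _
    have hbnn : 0 ≤ |b| ^ p := Real.rpow_nonneg (abs_nonneg b) _
    have hann : 0 ≤ |a| ^ p := Real.rpow_nonneg (abs_nonneg a) _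
    have hp2nn : 0 ≤ |w| ^ (p - 2) := Real.rpow_nonneg (abs_nonneg w) _
    have e1 : k * |w| ^ (p - 2) * w * a
        = k * (|w| ^ (p - 2) * w * w) - k * (|w| ^ (p - 2) * w * b) := by
      have : a = w - b := by rw [hwdef]; ring
      rw [this]; ring
    have e2 : k * (|w| ^ (p - 2) * w * w) = k * |w| ^ p := by
      rw [abs_rpow_self_mul hw]
    have l1 : Λ⁻¹ * ρ * |w| ^ p ≤ k * |w| ^ p :=
      mul_le_mul_of_nonneg_right hk1 hwnn
    -- one-sided bound of cross term
    have habs : k * (|w| ^ (p - 2) * w * b) ≤ Λ * ρ * (|w| ^ (p - 1) * |b|) := by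
      have s1 : |w| ^ (p - 2) * w * b ≤ |w| ^ (p - 1) * |b| := by
        have : w * b ≤ |w| * |b| := by
          calc w * b ≤ |w * b| := le_abs_self _
            _ = |w| * |b| := abs_mul _ _
        calc |w| ^ (p - 2) * w * b = |w| ^ (p - 2) * (w * b) := by ring
          _ ≤ |w| ^ (p - 2) * (|w| * |b|) := mul_le_mul_of_nonneg_left this hp2nn
          _ = |w| ^ (p - 2) * |w| * |b| := by ring
          _ = |w| ^ (p - 1) * |b| := by rw [abs_aux hw]
      have s2 : k * (|w| ^ (p - 2) * w * b) ≤ k * (|w| ^ (p - 1) * |b|) :=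
        mul_le_mul_of_nonneg_left s1 hk0
      have s3 : k * (|w| ^ (p - 1) * |b|) ≤ Λ * ρ * (|w| ^ (p - 1) * |b|) :=
        mul_le_mul_of_nonneg_right hk2
          (mul_nonneg (Real.rpow_nonneg (abs_nonneg w) _) (abs_nonneg b))
      linarith
    have hΛρ : (0:ℝ) ≤ Λ * ρ := mul_nonneg hΛ0.le hρ
    have l3 : Λ * ρ * (|w| ^ (p - 1) * |b|)
        ≤ Λ * ρ * (ε * |w| ^ p + ε ^ (1 - p) * |b| ^ p) :=
      mul_le_mul_of_nonneg_left (young_eps (abs_nonneg w) (abs_nonneg b) hε hp) hΛρ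
    have key : Λ⁻¹ * ρ * |w| ^ p - Λ * ρ * (ε * |w| ^ p + ε ^ (1 - p) * |b| ^ p)
        ≤ k * |w| ^ (p - 2) * w * a := by
      rw [e1, e2]; linarith
    have e3 : Λ⁻¹ * ρ * |w| ^ p - Λ * ρ * (ε * |w| ^ p + ε ^ (1 - p) * |b| ^ p)
        = (Λ⁻¹ / 2) * ρ * |w| ^ p - Λ * ε ^ (1 - p) * ρ * |b| ^ p := by
      linear_combination (-(ρ * |w| ^ p)) * hεΛ
    have l4 : |a| ^ p ≤ 2 ^ (p - 1) * (|w| ^ p + |b| ^ p) := by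
      have h5 : |a| ≤ |w| + |b| := by
        have ha : a = w - b := by rw [hwdef]; ring
        rw [ha]
        exact abs_sub _ _
      calc |a| ^ p ≤ (|w| + |b|) ^ p :=
            Real.rpow_le_rpow (abs_nonneg a) h5 (by linarith)
        _ ≤ _ := two_pow_ineq (abs_nonneg w) (abs_nonneg b) hp.le
    have hrel : (2:ℝ) ^ (-p) * 2 ^ (p - 1) = 1 / 2 := by
      rw [← Real.rpow_add two_pos, show -p + (p - 1) = -1 by ring, Real.rpow_neg_one]; norm_num
    have l4' : 2 ^ (-p) * |a| ^ p ≤ (1/2) * (|w| ^ p + |b| ^ p) := by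
      have h6 := mul_le_mul_of_nonneg_left l4
        (le_of_lt (Real.rpow_pos_of_pos two_pos (-p)))
      calc 2 ^ (-p) * |a| ^ p ≤ 2 ^ (-p) * (2 ^ (p - 1) * (|w| ^ p + |b| ^ p)) := h6
        _ = (2 ^ (-p) * 2 ^ (p - 1)) * (|w| ^ p + |b| ^ p) := by ring
        _ = (1/2) * (|w| ^ p + |b| ^ p) := by rw [hrel]
    have l4'' : Λ⁻¹ * ρ * (2 ^ (-p) * |a| ^ p)
        ≤ Λ⁻¹ * ρ * ((1/2) * (|w| ^ p + |b| ^ p)) :=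
      mul_le_mul_of_nonneg_left l4' (mul_nonneg hΛi.le hρ)
    rw [e3] at key
    nlinarith [key, l4'']

lemma key_upper {p Λ a b k ρ : ℝ} (hp : 1 < p) (hΛ : 1 ≤ Λ) (hρ : 0 ≤ ρ)
    (hk1 : Λ⁻¹ * ρ ≤ k) (hk2 : k ≤ Λ * ρ) :
    |k * |a + b| ^ (p - 2) * (a + b) * a| ≤ Λ * 2 ^ p * (|a| ^ p * ρ + |b| ^ p * ρ) := by
  have hΛ0 : (0:ℝ) < Λ := by linarith
  have hΛi : (0:ℝ) < Λ⁻¹ := inv_pos.2 hΛ0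
  have hk0 : 0 ≤ k := le_trans (mul_nonneg hΛi.le hρ) hk1
  have hann : 0 ≤ |a| ^ p := Real.rpow_nonneg (abs_nonneg a) _
  have hbnn : 0 ≤ |b| ^ p := Real.rpow_nonneg (abs_nonneg b) _
  set w : ℝ := a + b with hwdef
  clear_value w
  have hp2nn : 0 ≤ |w| ^ (p - 2) := Real.rpow_nonneg (abs_nonneg w) _
  have hwnn : 0 ≤ |w| ^ p := Real.rpow_nonneg (abs_nonneg w) _
  have h2p1 : (1:ℝ) ≤ 2 ^ (p - 1) := by
    have := Real.rpow_le_rpow_of_exponent_le one_le_two (show (0:ℝ) ≤ p - 1 by linarith)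
    rwa [Real.rpow_zero] at this
  have h2pp : (2:ℝ) ^ p = 2 ^ (p - 1) * 2 := by
    rw [← Real.rpow_add_one (two_ne_zero) (p - 1)]; norm_num
  by_cases hw : w = 0
  · rw [hw]
    have hz : |k * |(0:ℝ)| ^ (p - 2) * 0 * a| = 0 := by simp
    rw [hz]
    positivity
  · have s1 : |k * |w| ^ (p - 2) * w * a| = k * |w| ^ (p - 2) * |w| * |a| := by
      rw [abs_mul, abs_mul, abs_mul, abs_of_nonneg hk0, abs_of_nonneg hp2nn]
    have s2 : k * |w| ^ (p - 2) * |w| * |a| = k * (|w| ^ (p - 1) * |a|) := by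
      rw [mul_assoc k _ |w|, abs_aux hw, mul_assoc]
    have s3 : k * (|w| ^ (p - 1) * |a|) ≤ Λ * ρ * (|w| ^ (p - 1) * |a|) :=
      mul_le_mul_of_nonneg_right hk2
        (mul_nonneg (Real.rpow_nonneg (abs_nonneg w) _) (abs_nonneg a))
    have hΛρ : (0:ℝ) ≤ Λ * ρ := mul_nonneg hΛ0.le hρ
    have s4 : |w| ^ (p - 1) * |a| ≤ |w| ^ p + |a| ^ p := by
      have := young_eps (abs_nonneg w) (abs_nonneg a) one_pos hp
      rwa [Real.one_rpow, one_mul, one_mul] at this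
    have s5 : |w| ^ p ≤ 2 ^ (p - 1) * (|a| ^ p + |b| ^ p) := by
      have h5 : |w| ≤ |a| + |b| := by rw [hwdef]; exact abs_add_le _ _
      calc |w| ^ p ≤ (|a| + |b|) ^ p :=
            Real.rpow_le_rpow (abs_nonneg w) h5 (by linarith)
        _ ≤ _ := two_pow_ineq (abs_nonneg a) (abs_nonneg b) hp.le
    have s4' : Λ * ρ * (|w| ^ (p - 1) * |a|) ≤ Λ * ρ * (|w| ^ p + |a| ^ p) :=
      mul_le_mul_of_nonneg_left s4 hΛρ
    have s6 : Λ * ρ * (|w| ^ p + |a| ^ p)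
        ≤ Λ * ρ * (2 ^ (p - 1) * (|a| ^ p + |b| ^ p) + |a| ^ p) :=
      mul_le_mul_of_nonneg_left (by linarith) hΛρ
    have s7 : Λ * ρ * (2 ^ (p - 1) * (|a| ^ p + |b| ^ p) + |a| ^ p)
        ≤ Λ * 2 ^ p * (|a| ^ p * ρ + |b| ^ p * ρ) := by
      rw [h2pp]
      nlinarith [mul_nonneg hΛρ (mul_nonneg (sub_nonneg.2 h2p1) hann),
        mul_nonneg (mul_nonneg hΛρ (by linarith : (0:ℝ) ≤ 2 ^ (p - 1))) hbnn]
    rw [s1, s2]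
    linarith

/-- Inequality (1.10): coercivity of the nonlocal p-Laplace operator. -/
theorem nonlocal_pLaplace_coercive
    (n : ℕ) (hn : 1 ≤ n) (s p Λ : ℝ) (hs : s ∈ Ioo (0:ℝ) 1) (hp : 1 < p) (hΛ : 1 ≤ Λ) :
    ∃ α C : ℝ, 0 < α ∧ 0 ≤ C ∧
      ∀ K : En n → En n → ℝ, Measurable (fun q : En n × En n => K q.1 q.2) →
        (∀ (x y : En n), x ≠ y →
          Λ⁻¹ * ‖x - y‖ ^ (-((n : ℝ) + s * p)) ≤ K x y ∧
            K x y ≤ Λ * ‖x - y‖ ^ (-((n : ℝ) + s * p))) →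
      ∀ u g : En n → ℝ, Measurable u → Measurable g →
        gagL n s p u < ⊤ → gagL n s p g < ⊤ →
        α * (gagL n s p u).toReal - C * (gagL n s p g).toReal ≤
          ∫ x, ∫ y, K x y * |(u x + g x) - (u y + g y)| ^ (p - 2) *
            ((u x + g x) - (u y + g y)) * (u x - u y) := by
  have hΛ0 : (0:ℝ) < Λ := by linarith
  refine ⟨Λ⁻¹ * 2 ^ (-p), Λ⁻¹ / 2 + Λ * (Λ⁻¹ ^ 2 / 2) ^ (1 - p), ?_, ?_, ?_⟩
  · positivity
  · positivity
  intro K hK hKb u g hu hg hgu hgg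
  set α : ℝ := Λ⁻¹ * 2 ^ (-p) with hα
  set C : ℝ := Λ⁻¹ / 2 + Λ * (Λ⁻¹ ^ 2 / 2) ^ (1 - p) with hC
  set e : ℝ := -((n : ℝ) + s * p) with he
  have he0 : e ≠ 0 := by
    rw [he]
    have : (0:ℝ) < (n:ℝ) + s * p := by
      have : (1:ℝ) ≤ (n:ℝ) := by exact_mod_cast hn
      nlinarith [hs.1, hp]
    linarith
  have hp0 : p ≠ 0 := by linarith
  set ρf : En n × En n → ℝ := fun q => ‖q.1 - q.2‖ ^ e with hρf
  have hρmeas : Measurable ρf :=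
    ((measurable_fst.sub measurable_snd).norm).pow measurable_const
  have hρnn : ∀ q, 0 ≤ ρf q := fun q => Real.rpow_nonneg (norm_nonneg _) _
  set H : (En n → ℝ) → En n × En n → ℝ :=
    fun f q => |f q.1 - f q.2| ^ p * ρf q with hH
  have hHmeas : ∀ f : En n → ℝ, Measurable f → Measurable (H f) := fun f hf =>
    (((hf.comp measurable_fst).sub (hf.comp measurable_snd)).abs.pow
      measurable_const).mul hρmeas
  have hHnn : ∀ f q, 0 ≤ H f q := fun f q =>
    mul_nonneg (Real.rpow_nonneg (abs_nonneg _) _) (hρnn q)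
  have hgag : ∀ f : En n → ℝ, Measurable f →
      gagL n s p f = ∫⁻ q, ENNReal.ofReal (H f q) ∂(volume.prod volume) := by
    intro f hf
    rw [gagL]
    exact (lintegral_prod _ ((hHmeas f hf).ennreal_ofReal).aemeasurable).symm
  have hInt : ∀ f : En n → ℝ, Measurable f → gagL n s p f < ⊤ →
      Integrable (H f) (volume.prod volume) := by
    intro f hf hfin
    refine ⟨(hHmeas f hf).aestronglyMeasurable, ?_⟩
    rw [hasFiniteIntegral_iff_ofReal (Filter.Eventually.of_forall (hHnn f))]
    rw [← hgag f hf]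
    exact hfin
  set F : En n × En n → ℝ := fun q =>
    K q.1 q.2 * |(u q.1 + g q.1) - (u q.2 + g q.2)| ^ (p - 2) *
      ((u q.1 + g q.1) - (u q.2 + g q.2)) * (u q.1 - u q.2) with hFdef
  have hw_meas : Measurable (fun q : En n × En n =>
      (u q.1 + g q.1) - (u q.2 + g q.2)) :=
    ((hu.comp measurable_fst).add (hg.comp measurable_fst)).sub
      ((hu.comp measurable_snd).add (hg.comp measurable_snd))
  have hFmeas : Measurable F :=
    ((hK.mul (hw_meas.abs.pow measurable_const)).mul hw_meas).mul
      ((hu.comp measurable_fst).sub (hu.comp measurable_snd))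
  have hIu := hInt u hu hgu
  have hIg := hInt g hg hgg
  -- pointwise bounds
  have hbound : ∀ q : En n × En n,
      ‖F q‖ ≤ Λ * 2 ^ p * (H u q + H g q) := by
    intro q
    rw [Real.norm_eq_abs]
    by_cases hq : q.1 = q.2
    · have h1 : F q = 0 := by
        rw [hFdef]; simp [hq]
      rw [h1, abs_zero]
      have := hHnn u q; have := hHnn g q
      positivity
    · obtain ⟨hk1, hk2⟩ := hKb q.1 q.2 hq
      have heq : (u q.1 + g q.1) - (u q.2 + g q.2)
          = (u q.1 - u q.2) + (g q.1 - g q.2) := by ring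
      have := key_upper (a := u q.1 - u q.2) (b := g q.1 - g q.2)
        (k := K q.1 q.2) (ρ := ρf q) hp hΛ (hρnn q) hk1 hk2
      rw [hFdef, hH]
      simp only
      rw [heq]
      calc |K q.1 q.2 * |u q.1 - u q.2 + (g q.1 - g q.2)| ^ (p - 2) *
            (u q.1 - u q.2 + (g q.1 - g q.2)) * (u q.1 - u q.2)|
          ≤ Λ * 2 ^ p * (|u q.1 - u q.2| ^ p * ρf q + |g q.1 - g q.2| ^ p * ρf q) := this
        _ = Λ * 2 ^ p * (|u q.1 - u q.2| ^ p * ρf q + |g q.1 - g q.2| ^ p * ρf q) := rfl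
  have hFint : Integrable F (volume.prod volume) := by
    refine Integrable.mono' (((hIu.add hIg).const_mul (Λ * 2 ^ p)))
      hFmeas.aestronglyMeasurable (Filter.Eventually.of_forall ?_)
    intro q
    simpa using hbound q
  have hlow : ∀ q : En n × En n, α * H u q - C * H g q ≤ F q := by
    intro q
    by_cases hq : q.1 = q.2
    · have h1 : F q = 0 := by rw [hFdef]; simp [hq]
      have h2 : H u q = 0 := by
        rw [hH]; simp only [hq, sub_self, abs_zero, Real.zero_rpow hp0, zero_mul]
      have h3 : H g q = 0 := by
        rw [hH]; simp only [hq, sub_self, abs_zero, Real.zero_rpow hp0, zero_mul]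
      rw [h1, h2, h3]; ring_nf; rfl
    · obtain ⟨hk1, hk2⟩ := hKb q.1 q.2 hq
      have heq : (u q.1 + g q.1) - (u q.2 + g q.2)
          = (u q.1 - u q.2) + (g q.1 - g q.2) := by ring
      have := key_lower (a := u q.1 - u q.2) (b := g q.1 - g q.2)
        (k := K q.1 q.2) (ρ := ρf q) hp hΛ (hρnn q) hk1 hk2
      rw [hFdef, hH, hα, hC]
      simp only
      rw [heq]
      exact this
  -- integral identities
  have hval : ∀ f : En n → ℝ, Measurable f → gagL n s p f < ⊤ →
      ∫ q, H f q ∂(volume.prod volume) = (gagL n s p f).toReal := by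
    intro f hf hfin
    rw [integral_eq_lintegral_of_nonneg_ae (Filter.Eventually.of_forall (hHnn f))
      (hHmeas f hf).aestronglyMeasurable, ← hgag f hf]
  have hmono : ∫ q, (α * H u q - C * H g q) ∂(volume.prod volume)
      ≤ ∫ q, F q ∂(volume.prod volume) :=
    integral_mono ((hIu.const_mul α).sub (hIg.const_mul C)) hFint hlow
  have hsplit : ∫ q, (α * H u q - C * H g q) ∂(volume.prod volume)
      = α * (gagL n s p u).toReal - C * (gagL n s p g).toReal := by
    rw [integral_sub (hIu.const_mul α) (hIg.const_mul C), integral_const_mul,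
      integral_const_mul, hval u hu hgu, hval g hg hgg]
  have hdouble : ∫ x, ∫ y, K x y * |(u x + g x) - (u y + g y)| ^ (p - 2) *
      ((u x + g x) - (u y + g y)) * (u x - u y)
      = ∫ q, F q ∂(volume.prod volume) := integral_integral hFint
  rw [hdouble, ← hsplit]
  exact hmono
end
end

section
/- Fractional Poincaré inequality for functions vanishing outside a bounded set (inequality (1.9)): Let n ≥ 1, s ∈ (0,1), p ≥ 1 with sp < n. There is a constant C, depending only on n, s and p, such that for every bounded measurable set Ω ⊂ ℝ^n of positive measure and every measurable u : ℝ^n → ℝ vanishing a.e. outside Ω: ∫_{ℝ^n} |u(x)|^p dx ≤ C |Ω|^{sp/n} ∫_{ℝ^n}∫_{ℝ^n} |u(x)−u(y)|^p |x−y|^{−(n+sp)} dx dy. In particular [u]_{W^{s,p}(ℝ^n)} ≥ α ( ‖u‖_{L^p(ℝ^n)} + [u]_{W^{s,p}(ℝ^n)} ) for some α > 0 depending only on n, s, p and |Ω|. -/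
open MeasureTheory Set Metric ENNReal

noncomputable section

/-- Inequality (1.9): fractional Poincaré inequality for functions vanishing a.e. outside a
bounded set, together with the norm-equivalence consequence. -/
theorem fractional_poincare
    (n : ℕ) (hn : 1 ≤ n) (s p : ℝ) (hs : s ∈ Ioo (0:ℝ) 1) (hp : 1 ≤ p) (hsp : s * p < n) :
    ∃ C : ℝ, 0 < C ∧
      (∀ Ω : Set (En n), MeasurableSet Ω → Bornology.IsBounded Ω → 0 < volume Ω →
        ∀ u : En n → ℝ, Measurable u → (∀ᵐ x : En n, x ∉ Ω → u x = 0) →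
          (∫⁻ x, ENNReal.ofReal (|u x| ^ p)) ≤
            ENNReal.ofReal (C * (volume Ω).toReal ^ (s * p / (n : ℝ))) * gagL n s p u) ∧
      (∀ Ω : Set (En n), MeasurableSet Ω → Bornology.IsBounded Ω → 0 < volume Ω →
        ∃ α : ℝ, 0 < α ∧
          ∀ u : En n → ℝ, Measurable u → (∀ᵐ x : En n, x ∉ Ω → u x = 0) →
            gagL n s p u < ⊤ →
            α * (((∫⁻ x, ENNReal.ofReal (|u x| ^ p)).toReal) ^ (1 / p) + gagNorm n s p u) ≤
              gagNorm n s p u) := by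
  obtain ⟨hs0, hs1⟩ := hs
  have hn0 : (0:ℝ) < n := by exact_mod_cast Nat.lt_of_lt_of_le Nat.zero_lt_one hn
  have hp0 : (0:ℝ) < p := lt_of_lt_of_le one_pos hp
  have hsp0 : (0:ℝ) < s * p := mul_pos hs0 hp0
  set K : ℝ := (n:ℝ) + s * p with hK
  have hK0 : 0 < K := by positivity
  set ωe : ℝ≥0∞ := volume (ball (0 : En n) 1) with hωe
  have hωe0 : ωe ≠ 0 := (measure_ball_pos _ _ one_pos).ne'
  have hωet : ωe ≠ ∞ := measure_ball_lt_top.ne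
  set ω : ℝ := ωe.toReal with hωdef
  have hω : 0 < ω := ENNReal.toReal_pos hωe0 hωet
  set C : ℝ := 3 ^ K / ω ^ (K / (n:ℝ)) with hCdef
  have hC : 0 < C := div_pos (Real.rpow_pos_of_pos (by norm_num) K) (Real.rpow_pos_of_pos hω _)
  have key : ∀ Ω : Set (En n), MeasurableSet Ω → Bornology.IsBounded Ω → 0 < volume Ω →
      ∀ u : En n → ℝ, Measurable u → (∀ᵐ x : En n, x ∉ Ω → u x = 0) →
        (∫⁻ x, ENNReal.ofReal (|u x| ^ p)) ≤
          ENNReal.ofReal (C * (volume Ω).toReal ^ (s * p / (n : ℝ))) * gagL n s p u := by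
    intro Ω hΩ hΩb hΩ0 u hu hu0
    have hΩt : volume Ω ≠ ∞ := hΩb.measure_lt_top.ne
    set V : ℝ := (volume Ω).toReal with hVdef
    have hV : 0 < V := ENNReal.toReal_pos hΩ0.ne' hΩt
    have hVe : ENNReal.ofReal V = volume Ω := ENNReal.ofReal_toReal hΩt
    set R : ℝ := (V / ω) ^ ((n:ℝ)⁻¹) with hRdef
    have hVω : (0:ℝ) < V / ω := div_pos hV hω
    have hR : 0 < R := Real.rpow_pos_of_pos hVω _
    have hRn : R ^ n = V / ω := by
      rw [← Real.rpow_natCast R n, hRdef, ← Real.rpow_mul hVω.le,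
        inv_mul_cancel₀ hn0.ne', Real.rpow_one]
    have hball : ∀ (x : En n) (r : ℝ), 0 < r →
        volume (ball x r) = ENNReal.ofReal (r ^ n) * ωe := by
      intro x r hr
      rw [Measure.addHaar_ball_of_pos volume x hr, finrank_euclideanSpace_fin]
    have hballR : ∀ x : En n, volume (ball x R) = volume Ω := by
      intro x
      rw [hball x R hR, hRn, ENNReal.ofReal_div_of_pos hω, hVe, hωdef,
        ENNReal.ofReal_toReal hωet, ENNReal.div_mul_cancel hωe0 hωet]
    have hball3R : ∀ x : En n, volume (ball x (3 * R)) = ENNReal.ofReal (3 ^ n) * volume Ω := by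
      intro x
      rw [hball x _ (by positivity), mul_pow, ENNReal.ofReal_mul (by positivity), mul_assoc,
        ← hball x R hR, hballR x]
    have hSmeas : ∀ x : En n, MeasurableSet (Ωᶜ ∩ (ball x (3 * R) \ ball x R)) :=
      fun x => hΩ.compl.inter (measurableSet_ball.diff measurableSet_ball)
    have hSvol : ∀ x : En n, volume Ω ≤ volume (Ωᶜ ∩ (ball x (3 * R) \ ball x R)) := by
      intro x
      have hsub1 : ball x (3 * R) ⊆ ball x R ∪ (ball x (3 * R) \ ball x R) := by
        intro y hy
        by_cases h : y ∈ ball x R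
        · exact Or.inl h
        · exact Or.inr ⟨hy, h⟩
      have hsub2 : ball x (3 * R) \ ball x R ⊆
          (Ω ∩ (ball x (3 * R) \ ball x R)) ∪ (Ωᶜ ∩ (ball x (3 * R) \ ball x R)) := by
        intro y hy
        by_cases h : y ∈ Ω
        · exact Or.inl ⟨h, hy⟩
        · exact Or.inr ⟨h, hy⟩
      have h39 : (3:ℝ≥0∞) ≤ ENNReal.ofReal (3 ^ n) := by
        have h1 : (3:ℝ) ≤ 3 ^ n := le_self_pow₀ (by norm_num) (by omega)
        calc (3:ℝ≥0∞) = ENNReal.ofReal 3 := by norm_num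
          _ ≤ ENNReal.ofReal (3 ^ n) := ENNReal.ofReal_le_ofReal h1
      have hchain : 2 * volume Ω + volume Ω ≤
          2 * volume Ω + volume (Ωᶜ ∩ (ball x (3 * R) \ ball x R)) := by
        calc 2 * volume Ω + volume Ω = 3 * volume Ω := by ring
          _ ≤ ENNReal.ofReal (3 ^ n) * volume Ω := mul_le_mul_left h39 _
          _ = volume (ball x (3 * R)) := (hball3R x).symm
          _ ≤ volume (ball x R ∪ (ball x (3 * R) \ ball x R)) := measure_mono hsub1
          _ ≤ volume (ball x R) + volume (ball x (3 * R) \ ball x R) := measure_union_le _ _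
          _ ≤ volume (ball x R) + (volume (Ω ∩ (ball x (3 * R) \ ball x R)) +
                volume (Ωᶜ ∩ (ball x (3 * R) \ ball x R))) :=
              add_le_add_right (le_trans (measure_mono hsub2) (measure_union_le _ _)) _
          _ ≤ volume Ω + (volume Ω + volume (Ωᶜ ∩ (ball x (3 * R) \ ball x R))) :=
              add_le_add (hballR x).le
                (add_le_add (measure_mono inter_subset_left) le_rfl)
          _ = 2 * volume Ω + volume (Ωᶜ ∩ (ball x (3 * R) \ ball x R)) := by ring
      exact (ENNReal.add_le_add_iff_left (ENNReal.mul_ne_top (by norm_num) hΩt)).mp hchain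
    set d : ℝ≥0∞ := ENNReal.ofReal ((3 * R) ^ (-K) * V) with hddef
    have h3RK : (0:ℝ) < (3 * R) ^ (-K) := Real.rpow_pos_of_pos (by positivity) _
    have hd0 : d ≠ 0 := by
      rw [hddef]
      exact (ENNReal.ofReal_pos.mpr (by positivity)).ne'
    have hdt : d ≠ ∞ := ENNReal.ofReal_ne_top
    have hpoint : ∀ x : En n, ENNReal.ofReal (|u x| ^ p) * d ≤
        ∫⁻ y, ENNReal.ofReal (|u x - u y| ^ p * ‖x - y‖ ^ (-K)) := by
      intro x
      set S := Ωᶜ ∩ (ball x (3 * R) \ ball x R) with hSdef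
      have hae : ∀ᵐ y ∂(volume.restrict S),
          ENNReal.ofReal (|u x| ^ p * (3 * R) ^ (-K)) ≤
            ENNReal.ofReal (|u x - u y| ^ p * ‖x - y‖ ^ (-K)) := by
        have h1 : ∀ᵐ y ∂(volume.restrict S), y ∉ Ω → u y = 0 := ae_restrict_of_ae hu0
        have h2 : ∀ᵐ y ∂(volume.restrict S), y ∈ S := ae_restrict_mem (hSmeas x)
        filter_upwards [h1, h2] with y hy hyS
        obtain ⟨hyΩ, hyA⟩ := hyS
        rw [hy hyΩ, sub_zero]
        apply ENNReal.ofReal_le_ofReal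
        apply mul_le_mul_of_nonneg_left _ (Real.rpow_nonneg (abs_nonneg _) p)
        have hxy1 : R ≤ ‖x - y‖ := by
          have h := hyA.2
          rw [mem_ball, not_lt] at h
          rwa [← dist_eq_norm, dist_comm]
        have hxy2 : ‖x - y‖ ≤ 3 * R := by
          have h := hyA.1
          rw [mem_ball] at h
          rw [← dist_eq_norm, dist_comm]
          exact h.le
        exact Real.rpow_le_rpow_of_nonpos (lt_of_lt_of_le hR hxy1) hxy2 (neg_nonpos.mpr hK0.le)
      calc ENNReal.ofReal (|u x| ^ p) * d
          = ENNReal.ofReal (|u x| ^ p * (3 * R) ^ (-K)) * volume Ω := by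
            rw [hddef, ENNReal.ofReal_mul h3RK.le, hVe,
              ENNReal.ofReal_mul (Real.rpow_nonneg (abs_nonneg _) p), mul_assoc]
        _ ≤ ENNReal.ofReal (|u x| ^ p * (3 * R) ^ (-K)) * volume S :=
            mul_le_mul_right (hSvol x) _
        _ = ∫⁻ _ in S, ENNReal.ofReal (|u x| ^ p * (3 * R) ^ (-K)) :=
            (setLIntegral_const _ _).symm
        _ ≤ ∫⁻ y in S, ENNReal.ofReal (|u x - u y| ^ p * ‖x - y‖ ^ (-K)) :=
            lintegral_mono_ae hae
        _ ≤ ∫⁻ y, ENNReal.ofReal (|u x - u y| ^ p * ‖x - y‖ ^ (-K)) :=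
            setLIntegral_le_lintegral _ _
    have hgag : gagL n s p u = ∫⁻ x, ∫⁻ y, ENNReal.ofReal (|u x - u y| ^ p * ‖x - y‖ ^ (-K)) := by
      simp only [gagL, hK]
    have hdinv : d⁻¹ = ENNReal.ofReal (C * V ^ (s * p / (n:ℝ))) := by
      rw [hddef, ← ENNReal.ofReal_inv_of_pos (by positivity)]
      congr 1
      have e1 : (3 * R) ^ (-K) = ((3:ℝ) ^ K)⁻¹ * ((V / ω) ^ (K / (n:ℝ)))⁻¹ := by
        rw [Real.mul_rpow (by norm_num) hR.le, hRdef, ← Real.rpow_mul hVω.le,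
          show (n:ℝ)⁻¹ * -K = -(K / (n:ℝ)) by ring, Real.rpow_neg hVω.le,
          Real.rpow_neg (by norm_num : (0:ℝ) ≤ 3)]
      have e2 : (V / ω) ^ (K / (n:ℝ)) = (V ^ (s * p / (n:ℝ)) * V) / ω ^ (K / (n:ℝ)) := by
        rw [Real.div_rpow hV.le hω.le]
        congr 1
        rw [show K / (n:ℝ) = s * p / (n:ℝ) + 1 by rw [hK]; field_simp; ring,
          Real.rpow_add hV, Real.rpow_one]
      rw [e1, e2, hCdef]
      have h1 : (0:ℝ) < (3:ℝ) ^ K := Real.rpow_pos_of_pos (by norm_num) _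
      have h2 : (0:ℝ) < ω ^ (K / (n:ℝ)) := Real.rpow_pos_of_pos hω _
      have h3 : (0:ℝ) < V ^ (s * p / (n:ℝ)) := Real.rpow_pos_of_pos hV _
      field_simp
    calc (∫⁻ x, ENNReal.ofReal (|u x| ^ p))
        ≤ ∫⁻ x, d⁻¹ * ∫⁻ y, ENNReal.ofReal (|u x - u y| ^ p * ‖x - y‖ ^ (-K)) := by
          apply lintegral_mono
          intro x
          dsimp only
          rw [← one_mul (ENNReal.ofReal (|u x| ^ p)), ← ENNReal.inv_mul_cancel hd0 hdt,
            mul_assoc]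
          exact mul_le_mul_right (by rw [mul_comm]; exact hpoint x) _
      _ = d⁻¹ * ∫⁻ x, ∫⁻ y, ENNReal.ofReal (|u x - u y| ^ p * ‖x - y‖ ^ (-K)) :=
          lintegral_const_mul' _ _ (ENNReal.inv_ne_top.mpr hd0)
      _ = ENNReal.ofReal (C * V ^ (s * p / (n:ℝ))) * gagL n s p u := by rw [hdinv, hgag]
  refine ⟨C, hC, key, ?_⟩
  intro Ω hΩ hΩb hΩ0
  have hΩt : volume Ω ≠ ∞ := hΩb.measure_lt_top.ne
  set V : ℝ := (volume Ω).toReal with hVdef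
  have hV : 0 < V := ENNReal.toReal_pos hΩ0.ne' hΩt
  set M : ℝ := C * V ^ (s * p / (n:ℝ)) with hMdef
  have hM0 : 0 < M := mul_pos hC (Real.rpow_pos_of_pos hV _)
  have hc : (0:ℝ) < M ^ (1 / p) + 1 := by positivity
  refine ⟨1 / (M ^ (1 / p) + 1), by positivity, ?_⟩
  intro u hu hu0 hfin
  have h1 := key Ω hΩ hΩb hΩ0 u hu hu0
  have hfin' : ENNReal.ofReal M * gagL n s p u ≠ ∞ :=
    ENNReal.mul_ne_top ENNReal.ofReal_ne_top hfin.ne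
  have h2 : (∫⁻ x, ENNReal.ofReal (|u x| ^ p)).toReal ≤ M * (gagL n s p u).toReal := by
    have h := ENNReal.toReal_mono hfin' h1
    rwa [ENNReal.toReal_mul, ENNReal.toReal_ofReal hM0.le] at h
  simp only [gagNorm]
  set G : ℝ := (gagL n s p u).toReal ^ (1 / p) with hGdef
  have hGnn : 0 ≤ G := Real.rpow_nonneg ENNReal.toReal_nonneg _
  have h3 : (∫⁻ x, ENNReal.ofReal (|u x| ^ p)).toReal ^ (1 / p) ≤ M ^ (1 / p) * G := by
    calc (∫⁻ x, ENNReal.ofReal (|u x| ^ p)).toReal ^ (1 / p)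
        ≤ (M * (gagL n s p u).toReal) ^ (1 / p) :=
          Real.rpow_le_rpow ENNReal.toReal_nonneg h2 (by positivity)
      _ = M ^ (1 / p) * G := Real.mul_rpow hM0.le ENNReal.toReal_nonneg
  calc 1 / (M ^ (1 / p) + 1) * ((∫⁻ x, ENNReal.ofReal (|u x| ^ p)).toReal ^ (1 / p) + G)
      ≤ 1 / (M ^ (1 / p) + 1) * ((M ^ (1 / p) + 1) * G) := by
        apply mul_le_mul_of_nonneg_left _ (by positivity)
        nlinarith [h3]
    _ = G := by field_simp
end
end
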